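/- Consider an N-agent system on finite spaces X, U with transition kernel P : X × U × P(X) × P(U) → P(X) satisfying |P(x,u,μ₁,ν₁) − P(x,u,μ₂,ν₂)|₁ ≤ L_P(|μ₁−μ₂|₁ + |ν₁−ν₂|₁). Given joint state x_t^N with empirical distribution μ_t^N, agents sample actions u_t^i ∼ π_t(x_t^i, μ_t^N) independently, and next states x_{t+1}^i ∼ P(x_t^i, u_t^i, μ_t^N, ν_t^N) independently given states and actions, where ν_t^N is the empirical action distribution. Let μ_{t+1}^N be the empirical distribution of the next states and P^MF the mean-field update defined by P^MF(μ,π)(y) = Σ_x Σ_u P(x,u,μ,ν^MF(μ,π))(y) π(x,μ)(u) μ(x). Then E|μ_{t+1}^N − P^MF(μ_t^N, π_t)|₁ ≤ (2 + L_P)(√(|X|) + √(|U|))/√N. -/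

import Mathlib

open Finset

def IsPmf {X : Type*} [Fintype X] (μ : X → ℝ) : Prop :=
  (∀ x, 0 ≤ μ x) ∧ ∑ x, μ x = 1

noncomputable def l1 {X : Type*} [Fintype X] (f : X → ℝ) : ℝ := ∑ x, |f x|

/-- Empirical distribution of a configuration of `N` agents. -/
noncomputable def emp {X : Type*} [Fintype X] [DecidableEq X] {N : ℕ}
    (s : Fin N → X) : X → ℝ :=
  fun x => (∑ i, if s i = x then (1 : ℝ) else 0) / N

/-- The mean-field action distribution `ν^MF(μ, π)`. -/
noncomputable def nuMF {X U : Type*} [Fintype X] [Fintype U]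
    (μ : X → ℝ) (π : X → (X → ℝ) → U → ℝ) : U → ℝ :=
  fun u => ∑ x, π x μ u * μ x

/-- The one-step mean-field state distribution update `P^MF(μ, π)`. -/
noncomputable def PMF' {X U : Type*} [Fintype X] [Fintype U]
    (P : X → U → (X → ℝ) → (U → ℝ) → X → ℝ)
    (μ : X → ℝ) (π : X → (X → ℝ) → U → ℝ) : X → ℝ :=
  fun y => ∑ x, ∑ u, P x u μ (nuMF μ π) y * π x μ u * μ x

/-!
Insert two intermediate distributions between `μ_{t+1}^N` and `P^MF(μ_t^N, π_t)`: the
conditional mean `(1/N) ∑ᵢ P(xᵢ, uᵢ, μ_t^N, ν_t^N)` of the next empirical state given the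
actions, and the same average with `ν_t^N` replaced by `ν^MF`. The two outer gaps are deviations
of an average of `N` independent random probability vectors on a finite set `Y` from its mean:
in each coordinate the variance is at most `mean / N`, and Cauchy–Schwarz over the coordinates
turns this into the `l1` bound `√|Y| / √N`. The middle gap is at most `L_P |ν_t^N - ν^MF|₁` by
the Lipschitz condition, and `ν_t^N` is again an average of independent point masses, with mean
`ν^MF`.
-/

section ProdExpect

variable {ι V : Type*} [Fintype ι] [DecidableEq ι] [Fintype V]

/-- Expectation of `F` when the coordinates `v i` are drawn independently from the weights `q i`. -/
noncomputable def prodExpect (q : ι → V → ℝ) (F : (ι → V) → ℝ) : ℝ :=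
  ∑ v, (∏ i, q i (v i)) * F v

variable {q : ι → V → ℝ}

theorem prodExpect_sum {α : Type*} (s : Finset α) (F : α → (ι → V) → ℝ) :
    prodExpect q (fun v => ∑ a ∈ s, F a v) = ∑ a ∈ s, prodExpect q (F a) := by
  simp only [prodExpect, mul_sum]
  exact sum_comm

theorem prodExpect_add (F G : (ι → V) → ℝ) :
    prodExpect q (fun v => F v + G v) = prodExpect q F + prodExpect q G := by
  simp only [prodExpect, mul_add, sum_add_distrib]

theorem prodExpect_const_mul (c : ℝ) (F : (ι → V) → ℝ) :
    prodExpect q (fun v => c * F v) = c * prodExpect q F := by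
  simp only [prodExpect, mul_sum, mul_left_comm]

theorem prodExpect_mono (hq : ∀ i w, 0 ≤ q i w) {F G : (ι → V) → ℝ}
    (h : ∀ v, F v ≤ G v) : prodExpect q F ≤ prodExpect q G :=
  sum_le_sum fun v _ => mul_le_mul_of_nonneg_left (h v) (prod_nonneg fun i _ => hq i (v i))

theorem prodExpect_prod_apply (g : ι → V → ℝ) :
    prodExpect q (fun v => ∏ i, g i (v i)) = ∏ i, ∑ w, q i w * g i w := by
  simp only [prodExpect, ← prod_mul_distrib]
  exact (Fintype.prod_sum fun i w => q i w * g i w).symm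

theorem prodExpect_const (hq : ∀ i, ∑ w, q i w = 1) (c : ℝ) :
    prodExpect q (fun _ => c) = c := by
  rw [prodExpect, ← sum_mul, ← Fintype.prod_sum]
  simp [hq]

theorem prodExpect_apply (hq : ∀ i, ∑ w, q i w = 1) (k : ι) (g : V → ℝ) :
    prodExpect q (fun v => g (v k)) = ∑ w, q k w * g w := by
  have := prodExpect_prod_apply (q := q) fun i w => if i = k then g w else 1
  simp only [prod_ite_eq', mem_univ, if_true] at this
  rw [this, prod_eq_single k (fun i _ hi => by simp [hi, hq])] <;> simp

theorem prodExpect_apply_mul_apply_eq_zero {i j : ι} (hij : i ≠ j)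
    (g h : V → ℝ) (hg : ∑ w, q i w * g w = 0) :
    prodExpect q (fun v => g (v i) * h (v j)) = 0 := by
  have := prodExpect_prod_apply (q := q)
    fun k w => (if k = i then g w else 1) * (if k = j then h w else 1)
  simp only [prod_mul_distrib, prod_ite_eq', mem_univ, if_true] at this
  rw [this]
  exact prod_eq_zero (mem_univ i) (by simpa [hij] using hg)

theorem prodExpect_sq_sum_of_mean_eq_zero (hq : ∀ i, ∑ w, q i w = 1) (g : ι → V → ℝ)
    (hg : ∀ i, ∑ w, q i w * g i w = 0) :
    prodExpect q (fun v => (∑ i, g i (v i)) ^ 2) = ∑ i, ∑ w, q i w * g i w ^ 2 := by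
  simp only [sq, sum_mul_sum, prodExpect_sum]
  refine sum_congr rfl fun i _ => ?_
  rw [sum_eq_single i (fun j _ hji => prodExpect_apply_mul_apply_eq_zero hji.symm _ _ (hg i))
    (by simp)]
  exact prodExpect_apply hq i fun w => g i w * g i w

end ProdExpect

theorem sum_mul_sub_mean_sq_le {V : Type*} [Fintype V] {p f : V → ℝ} (hp : IsPmf p)
    (hf₀ : ∀ w, 0 ≤ f w) (hf₁ : ∀ w, f w ≤ 1) :
    ∑ w, p w * (f w - ∑ w', p w' * f w') ^ 2 ≤ ∑ w, p w * f w := by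
  set m := ∑ w, p w * f w
  have hvar : ∑ w, p w * (f w - m) ^ 2 = ∑ w, p w * f w ^ 2 - m ^ 2 := by
    have hterm : ∀ w, p w * (f w - m) ^ 2 = p w * f w ^ 2 - 2 * m * (p w * f w) + m ^ 2 * p w :=
      fun w => by ring
    rw [sum_congr rfl fun w _ => hterm w, sum_add_distrib, sum_sub_distrib, ← mul_sum,
      ← mul_sum, hp.2]
    ring
  have hsq : ∑ w, p w * f w ^ 2 ≤ m :=
    sum_le_sum fun w _ => mul_le_mul_of_nonneg_left (by nlinarith [hf₀ w, hf₁ w]) (hp.1 w)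
  nlinarith [sq_nonneg m]

section Deviation

variable {ι V : Type*} [Fintype ι] [DecidableEq ι] [Fintype V] {q : ι → V → ℝ}

theorem prodExpect_abs_le_sqrt (hq : ∀ i, IsPmf (q i)) (F : (ι → V) → ℝ) :
    prodExpect q (fun v => |F v|) ≤ √(prodExpect q fun v => F v ^ 2) := by
  have hW : ∀ v : ι → V, 0 ≤ ∏ i, q i (v i) := fun v =>
    prod_nonneg fun i _ => (hq i).1 (v i)
  have hW₁ : ∑ v : ι → V, ∏ i, q i (v i) = 1 := by
    simpa [prodExpect] using prodExpect_const (q := q) (fun i => (hq i).2) 1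
  calc prodExpect q (fun v => |F v|)
      = ∑ v, √(∏ i, q i (v i)) * √((∏ i, q i (v i)) * F v ^ 2) := by
        refine sum_congr rfl fun v _ => ?_
        rw [Real.sqrt_mul (hW v), ← mul_assoc, Real.mul_self_sqrt (hW v), Real.sqrt_sq_eq_abs]
    _ ≤ √(∑ v : ι → V, ∏ i, q i (v i)) * √(prodExpect q fun v => F v ^ 2) :=
        Real.sum_sqrt_mul_sqrt_le _ hW fun v => mul_nonneg (hW v) (sq_nonneg _)
    _ = √(prodExpect q fun v => F v ^ 2) := by rw [hW₁, Real.sqrt_one, one_mul]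

theorem prodExpect_abs_sum_sub_mean_le (hq : ∀ i, IsPmf (q i)) {f : ι → V → ℝ}
    (hf₀ : ∀ i w, 0 ≤ f i w) (hf₁ : ∀ i w, f i w ≤ 1) :
    prodExpect q (fun v => |∑ i, (f i (v i) - ∑ w, q i w * f i w)|)
      ≤ √(∑ i, ∑ w, q i w * f i w) := by
  refine (prodExpect_abs_le_sqrt hq _).trans (Real.sqrt_le_sqrt ?_)
  have hmean : ∀ i, ∑ w, q i w * (f i w - ∑ w', q i w' * f i w') = 0 := fun i => by
    simp only [mul_sub, sum_sub_distrib, ← sum_mul, (hq i).2, one_mul, sub_self]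
  rw [prodExpect_sq_sum_of_mean_eq_zero (fun i => (hq i).2) _ hmean]
  exact sum_le_sum fun i _ => sum_mul_sub_mean_sq_le (hq i) (hf₀ i) (hf₁ i)

end Deviation

theorem sum_sqrt_le_sqrt_card_mul_sqrt_sum {Y : Type*} [Fintype Y] {g : Y → ℝ}
    (hg : ∀ y, 0 ≤ g y) : ∑ y, √(g y) ≤ √(Fintype.card Y) * √(∑ y, g y) := by
  simpa using Real.sum_sqrt_mul_sqrt_le univ (fun _ => zero_le_one) hg

theorem prodExpect_l1_average_sub_mean_le {N : ℕ} (hN : 0 < N) {V Y : Type*} [Fintype V]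
    [Fintype Y] {q : Fin N → V → ℝ} (hq : ∀ i, IsPmf (q i)) {f : Fin N → V → Y → ℝ}
    (hf : ∀ i w, IsPmf (f i w)) :
    prodExpect q (fun v => l1 fun y =>
        (∑ i, f i (v i) y) / N - (∑ i, ∑ w, q i w * f i w y) / N)
      ≤ √(Fintype.card Y) / √N := by
  have hNpos : (0 : ℝ) < N := Nat.cast_pos.2 hN
  set S : Y → ℝ := fun y => ∑ i, ∑ w, q i w * f i w y
  have hS₀ : ∀ y, 0 ≤ S y := fun y =>
    sum_nonneg fun i _ => sum_nonneg fun w _ => mul_nonneg ((hq i).1 w) ((hf i w).1 y)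
  have hS : ∑ y, S y = N := by
    simp only [S, sum_comm (s := univ (α := Y)), ← mul_sum, (hf _ _).2, mul_one, (hq _).2]
    simp
  have hcoord : ∀ y, prodExpect q (fun v => |(∑ i, f i (v i) y) / N - S y / N|)
      ≤ (N : ℝ)⁻¹ * √(S y) := by
    intro y
    have hrw : ∀ v : Fin N → V, |(∑ i, f i (v i) y) / N - S y / N|
        = (N : ℝ)⁻¹ * |∑ i, (f i (v i) y - ∑ w, q i w * f i w y)| := fun v => by
      rw [sum_sub_distrib, ← sub_div, abs_div, abs_of_pos hNpos, inv_mul_eq_div]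
    have hf₁ : ∀ i w, f i w y ≤ 1 := fun i w =>
      (single_le_sum (fun y' _ => (hf i w).1 y') (mem_univ y)).trans_eq (hf i w).2
    simp only [hrw, prodExpect_const_mul]
    gcongr
    exact prodExpect_abs_sum_sub_mean_le hq (fun i w => (hf i w).1 y) hf₁
  calc prodExpect q (fun v => l1 fun y => (∑ i, f i (v i) y) / N - S y / N)
      = ∑ y, prodExpect q (fun v => |(∑ i, f i (v i) y) / N - S y / N|) := prodExpect_sum _ _
    _ ≤ ∑ y, (N : ℝ)⁻¹ * √(S y) := sum_le_sum fun y _ => hcoord y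
    _ ≤ (N : ℝ)⁻¹ * (√(Fintype.card Y) * √N) := by
        rw [← mul_sum]
        gcongr
        exact hS ▸ sum_sqrt_le_sqrt_card_mul_sqrt_sum hS₀
    _ = √(Fintype.card Y) / √N := by
        field_simp
        rw [Real.sq_sqrt hNpos.le, mul_comm]

theorem l1_sub_le_add {X : Type*} [Fintype X] (f g h : X → ℝ) :
    l1 (fun y => f y - h y) ≤ l1 (fun y => f y - g y) + l1 (fun y => g y - h y) := by
  simp only [l1, ← sum_add_distrib]
  exact sum_le_sum fun y _ => abs_sub_le _ _ _

theorem l1_sum_div_sub_sum_div_le {X : Type*} [Fintype X] {N : ℕ} (hN : 0 < N)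
    {F G : Fin N → X → ℝ} {K : ℝ} (hFG : ∀ i, l1 (fun y => F i y - G i y) ≤ K) :
    l1 (fun y => (∑ i, F i y) / N - (∑ i, G i y) / N) ≤ K := by
  have hNpos : (0 : ℝ) < N := Nat.cast_pos.2 hN
  calc l1 (fun y => (∑ i, F i y) / N - (∑ i, G i y) / N)
      = ∑ y, |∑ i, (F i y - G i y)| / N := by
        simp only [l1, ← sub_div, sum_sub_distrib, abs_div, abs_of_pos hNpos]
    _ ≤ (∑ i, l1 (fun y => F i y - G i y)) / N := by
        rw [← sum_div]
        gcongr
        simp only [l1]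
        rw [sum_comm]
        exact sum_le_sum fun y _ => abs_sum_le_sum_abs _ _
    _ ≤ (∑ _i : Fin N, K) / N := by gcongr with i; exact hFG i
    _ = K := by simp [hNpos.ne']

section Empirical

variable {V : Type*} [Fintype V] [DecidableEq V] {N : ℕ}

theorem emp_isPmf (hN : 0 < N) (s : Fin N → V) : IsPmf (emp s) := by
  have hNpos : (0 : ℝ) < N := Nat.cast_pos.2 hN
  refine ⟨fun y => div_nonneg (sum_nonneg fun i _ => by positivity) hNpos.le, ?_⟩
  simp only [emp, ← sum_div, sum_comm (s := univ (α := V)), sum_ite_eq, mem_univ, if_true]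
  simp [hNpos.ne']

theorem sum_mul_emp (s : Fin N → V) (g : V → ℝ) :
    ∑ w, g w * emp s w = (∑ i, g (s i)) / N := by
  simp only [emp, mul_div_assoc', ← sum_div, mul_sum, mul_ite, mul_one, mul_zero]
  rw [sum_comm]
  simp

theorem prodExpect_l1_emp_sub_mean_le (hN : 0 < N) {q : Fin N → V → ℝ}
    (hq : ∀ i, IsPmf (q i)) :
    prodExpect q (fun v => l1 fun w => emp v w - (∑ i, q i w) / N)
      ≤ √(Fintype.card V) / √N := by
  have hδ : ∀ w : V, IsPmf fun y => if w = y then (1 : ℝ) else 0 := fun w =>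
    ⟨fun y => by positivity, by simp⟩
  have := prodExpect_l1_average_sub_mean_le hN hq
    (f := fun _ w y => if w = y then (1 : ℝ) else 0) fun _ w => hδ w
  simp only [mul_ite, mul_one, mul_zero, sum_ite_eq', mem_univ, if_true] at this
  exact this

theorem prodExpect_l1_emp_sub_le_add (hN : 0 < N) {q : Fin N → V → ℝ}
    (hq : ∀ i, IsPmf (q i)) (t : V → ℝ) :
    prodExpect q (fun v => l1 fun w => emp v w - t w)
      ≤ √(Fintype.card V) / √N + l1 (fun w => (∑ i, q i w) / N - t w) := by
  calc prodExpect q (fun v => l1 fun w => emp v w - t w)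
      ≤ prodExpect q (fun v => l1 (fun w => emp v w - (∑ i, q i w) / N)
          + l1 (fun w => (∑ i, q i w) / N - t w)) :=
        prodExpect_mono (fun i => (hq i).1) fun v => l1_sub_le_add _ _ _
    _ ≤ _ := by
        rw [prodExpect_add, prodExpect_const fun i => (hq i).2]
        exact add_le_add_left (prodExpect_l1_emp_sub_mean_le hN hq) _

end Empirical

section MeanField

variable {X U : Type*} [Fintype X] [Fintype U]

theorem nuMF_isPmf {μ : X → ℝ} {π : X → (X → ℝ) → U → ℝ} (hμ : IsPmf μ)
    (hπ : ∀ x, IsPmf (π x μ)) : IsPmf (nuMF μ π) := by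
  refine ⟨fun u => sum_nonneg fun x _ => mul_nonneg ((hπ x).1 u) (hμ.1 x), ?_⟩
  simp only [nuMF]
  rw [sum_comm]
  simp only [← sum_mul, (hπ _).2, one_mul, hμ.2]

variable [DecidableEq X] {N : ℕ}

theorem nuMF_emp (s : Fin N → X) (π : X → (X → ℝ) → U → ℝ) (u : U) :
    nuMF (emp s) π u = (∑ i, π (s i) (emp s) u) / N :=
  sum_mul_emp s fun x => π x (emp s) u

theorem PMF'_emp (P : X → U → (X → ℝ) → (U → ℝ) → X → ℝ) (s : Fin N → X)
    (π : X → (X → ℝ) → U → ℝ) (y : X) :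
    PMF' P (emp s) π y
      = (∑ i, ∑ u, π (s i) (emp s) u * P (s i) u (emp s) (nuMF (emp s) π) y) / N := by
  refine Eq.trans ?_
    (sum_mul_emp s fun x => ∑ u, π x (emp s) u * P x u (emp s) (nuMF (emp s) π) y)
  simp only [PMF', sum_mul]
  exact sum_congr rfl fun x _ => sum_congr rfl fun u _ => by ring

theorem prodExpect_l1_emp_kernel_sub_le [DecidableEq U] (hN : 0 < N)
    {K : X → U → (U → ℝ) → X → ℝ} {ν : U → ℝ} {L : ℝ}
    (hK : ∀ x u ν', IsPmf ν' → IsPmf (K x u ν'))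
    (hLip : ∀ x u ν', IsPmf ν' →
      l1 (fun y => K x u ν' y - K x u ν y) ≤ L * l1 (fun u' => ν' u' - ν u'))
    (s : Fin N → X) (a : Fin N → U) (t : X → ℝ) :
    prodExpect (fun i => K (s i) (a i) (emp a)) (fun s' => l1 fun y => emp s' y - t y)
      ≤ √(Fintype.card X) / √N + L * l1 (fun u => emp a u - ν u)
        + l1 (fun y => (∑ i, K (s i) (a i) ν y) / N - t y) := by
  have ha : IsPmf (emp a) := emp_isPmf hN a
  refine (prodExpect_l1_emp_sub_le_add hN (fun i => hK _ _ _ ha) t).trans ?_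
  rw [add_assoc]
  gcongr
  refine (l1_sub_le_add _ (fun y => (∑ i, K (s i) (a i) ν y) / N) t).trans ?_
  gcongr
  exact l1_sum_div_sub_sum_div_le hN fun i => hLip _ _ _ ha

end MeanField

/-- Lemma 5: one-step propagation bound.  Conditioned on the joint state `x`, the agents
sample actions independently via `π`, then next states independently via `P` (which also
takes the empirical action distribution as an argument).  The expected L1 distance between
the next empirical state distribution and the mean-field update `P^MF(emp x, π)` is at most
`(2 + L_P)(√|X| + √|U|)/√N`.  The expectation is written out explicitly as a sum over all
joint actions and joint next states, weighted by the corresponding product law. -/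
theorem empirical_state_update_bound
    {X U : Type*} [Fintype X] [Fintype U] [DecidableEq X] [DecidableEq U]
    (N : ℕ) (hN : 0 < N)
    (L_P : ℝ) (hLP : 0 < L_P)
    (P : X → U → (X → ℝ) → (U → ℝ) → X → ℝ)
    (hP : ∀ x u μ ν, IsPmf μ → IsPmf ν → IsPmf (P x u μ ν))
    (hPLip : ∀ x u μ₁ μ₂ ν₁ ν₂, IsPmf μ₁ → IsPmf μ₂ → IsPmf ν₁ → IsPmf ν₂ →
      l1 (fun y => P x u μ₁ ν₁ y - P x u μ₂ ν₂ y)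
        ≤ L_P * (l1 (fun x' => μ₁ x' - μ₂ x') + l1 (fun u' => ν₁ u' - ν₂ u')))
    (π : X → (X → ℝ) → U → ℝ)
    (hπ : ∀ x μ, IsPmf μ → IsPmf (π x μ))
    (x : Fin N → X) :
    ∑ a : Fin N → U, ∑ s' : Fin N → X,
        ((∏ i, π (x i) (emp x) (a i)) * ∏ i, P (x i) (a i) (emp x) (emp a) (s' i)) *
          l1 (fun y => emp s' y - PMF' P (emp x) π y)
      ≤ (2 + L_P) * (Real.sqrt (Fintype.card X) + Real.sqrt (Fintype.card U)) / Real.sqrt N := by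
  have hμ : IsPmf (emp x) := emp_isPmf hN x
  have hπx : ∀ i, IsPmf (π (x i) (emp x)) := fun i => hπ (x i) _ hμ
  have hν : IsPmf (nuMF (emp x) π) := nuMF_isPmf hμ fun x' => hπ x' _ hμ
  set μ := emp x
  set ν := nuMF μ π
  have hνx : ∀ u, ν u = (∑ i, π (x i) μ u) / N := nuMF_emp x π
  have hPMF : ∀ y, PMF' P μ π y = (∑ i, ∑ u, π (x i) μ u * P (x i) u μ ν y) / N :=
    PMF'_emp P x π
  have hstep := prodExpect_l1_emp_kernel_sub_le hN (K := fun x u ν' => P x u μ ν')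
    (fun _ _ _ hν' => hP _ _ _ _ hμ hν')
    (fun x u ν' hν' => by
      simpa only [l1, sub_self, abs_zero, sum_const_zero, zero_add]
        using hPLip x u μ μ ν' ν hμ hμ hν' hν) x
  set E := prodExpect fun i => π (x i) μ
  calc _ = E fun a => prodExpect (fun i => P (x i) (a i) μ (emp a))
          fun s' => l1 fun y => emp s' y - PMF' P μ π y := by
        simp only [E, prodExpect, mul_sum, mul_assoc]
    _ ≤ _ := prodExpect_mono (fun i => (hπx i).1) fun a => hstep a _
    _ = √(Fintype.card X) / √N + L_P * E (fun a => l1 fun u => emp a u - ν u)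
          + E fun a => l1 fun y => (∑ i, P (x i) (a i) μ ν y) / N - PMF' P μ π y := by
        rw [prodExpect_add, prodExpect_add, prodExpect_const fun i => (hπx i).2,
          prodExpect_const_mul]
    _ ≤ √(Fintype.card X) / √N + L_P * (√(Fintype.card U) / √N)
          + √(Fintype.card X) / √N := by
        gcongr
        · simpa only [hνx] using prodExpect_l1_emp_sub_mean_le hN hπx
        · simpa only [hPMF] using prodExpect_l1_average_sub_mean_le hN hπx
            (f := fun i u y => P (x i) u μ ν y) fun i u => hP _ _ _ _ hμ hν
    _ ≤ (2 + L_P) * (√(Fintype.card X) + √(Fintype.card U)) / √N := by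
        rw [← sub_nonneg]
        ring_nf
        positivity
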